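/- arXiv:1408.2118 — 3 statements merged into one kernel-verified Lean document; each statement's English description precedes it below -/
import Mathlib

section
/- For a ∈ ℂ with a ≠ 1 and 1 + 3a ≠ 0, let f_a(z) = (1+3a)(−a+z) / ((1−a)(3az + z²)). Then the second iterate f_a² converges, as a → 1, to the map g(z) = z(3+z)/(z−1), locally uniformly on ℂ minus a finite set of points. -/
open Filter Topology

/-- The family `f_a(z) = (1+3a)(−a+z)/((1−a)(3az+z²))`. -/
noncomputable def fFam (a z : ℂ) : ℂ := ((1 + 3 * a) * (-a + z)) / ((1 - a) * (3 * a * z + z ^ 2))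

/-- The limit map `g(z) = z(3+z)/(z−1)`. -/
noncomputable def gLim (z : ℂ) : ℂ := z * (3 + z) / (z - 1)

/-- Numerator of the simplified second iterate. -/
noncomputable def Pp (a z : ℂ) : ℂ :=
  (1 + 3*a) * ((1 + 3*a)*(z - a) - a*(1 - a)*(3*a*z + z^2)) * (3*a*z + z^2)

/-- Denominator of the simplified second iterate. -/
noncomputable def Qq (a z : ℂ) : ℂ :=
  (1 + 3*a)*(z - a) * (3*a*(1 - a)*(3*a*z + z^2) + (1 + 3*a)*(z - a))

lemma key (a y : ℂ) (ha : a ≠ 1) (h1 : 1 + 3*a ≠ 0) (h2 : 3*a*y + y^2 ≠ 0)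
    (h3 : y - a ≠ 0) (h4 : 3*a*(1 - a)*(3*a*y + y^2) + (1 + 3*a)*(y - a) ≠ 0) :
    fFam a (fFam a y) = Pp a y / Qq a y := by
  have ha' : (1:ℂ) - a ≠ 0 := sub_ne_zero.mpr (Ne.symm ha)
  have h3' : -a + y ≠ 0 := by intro h; apply h3; linear_combination h
  set N := (1 + 3*a) * (-a + y) with hNdef
  set D := (1 - a) * (3*a*y + y^2) with hDdef
  have hD : D ≠ 0 := mul_ne_zero ha' h2
  have hN : N ≠ 0 := mul_ne_zero h1 h3'
  have h4' : 3*a*D + N ≠ 0 := by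
    rw [hNdef, hDdef]; intro h; apply h4; linear_combination h
  have hfy : fFam a y = N / D := rfl
  have e1 : -a + N/D = (N - a*D)/D := by field_simp; ring
  have e2 : 3*a*(N/D) + (N/D)^2 = (N*(3*a*D+N))/D^2 := by field_simp
  have main : fFam a (fFam a y)
      = (((1+3*a)*(N-a*D))*D) / ((1-a)*(N*(3*a*D+N))) := by
    rw [hfy]
    show ((1 + 3 * a) * (-a + N/D)) / ((1 - a) * (3 * a * (N/D) + (N/D) ^ 2)) = _
    rw [e1, e2]
    field_simp
  have h4'' : 3*a*((1-a)*(3*a*y+y^2)) + (1+3*a)*(-a+y) ≠ 0 := by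
    intro h; apply h4; linear_combination h
  have hN' : (1 + 3*a) * (-a + y) ≠ 0 := mul_ne_zero h1 h3'
  have hL : (1-a) * ((1+3*a)*(-a+y) * (3*a*((1-a)*(3*a*y+y^2)) + (1+3*a)*(-a+y))) ≠ 0 :=
    mul_ne_zero ha' (mul_ne_zero hN' h4'')
  have hR : Qq a y ≠ 0 := mul_ne_zero (mul_ne_zero h1 h3) h4
  rw [main, hNdef, hDdef, div_eq_div_iff hL hR]
  unfold Pp Qq; ring

lemma qq_one (y : ℂ) : Qq 1 y = 16 * (y - 1)^2 := by unfold Qq; ring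

lemma glim_eq (y : ℂ) (hy : y - (1:ℂ) ≠ 0) : gLim y = Pp 1 y / Qq 1 y := by
  have hQ : Qq 1 y ≠ 0 := by
    rw [qq_one]; exact mul_ne_zero (by norm_num) (pow_ne_zero _ hy)
  unfold gLim
  rw [div_eq_div_iff hy hQ, qq_one]
  unfold Pp; ring

lemma hPc : Continuous fun p : ℂ × ℂ => Pp p.1 p.2 := by unfold Pp; fun_prop

lemma hQc : Continuous fun p : ℂ × ℂ => Qq p.1 p.2 := by unfold Qq; fun_prop

/-- the second iterate `f_a²` converges, as `a → 1`, to `g(z) = z(3+z)/(z−1)`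
locally uniformly on ℂ minus a finite set of points. -/
theorem stmt3 :
    ∃ S : Set ℂ, S.Finite ∧
      TendstoLocallyUniformlyOn (fun a z => fFam a (fFam a z)) gLim
        (nhdsWithin (1 : ℂ) {(1 : ℂ)}ᶜ) Sᶜ := by
  refine ⟨{0, -3, 1}, Set.toFinite _, ?_⟩
  rw [Metric.tendstoLocallyUniformlyOn_iff]
  intro ε hε x hx
  simp only [Set.mem_compl_iff, Set.mem_insert_iff, Set.mem_singleton_iff, not_or] at hx
  obtain ⟨hx0, hx3, hx1⟩ := hx
  set G : ℂ × ℂ → ℂ := fun p => Pp p.1 p.2 / Qq p.1 p.2 with hG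
  have hx1' : x - (1:ℂ) ≠ 0 := sub_ne_zero.mpr hx1
  have hQx : Qq 1 x ≠ 0 := by
    rw [qq_one]; exact mul_ne_zero (by norm_num) (pow_ne_zero _ hx1')
  have hGc : ContinuousAt G (1, x) :=
    (hPc.continuousAt).div (hQc.continuousAt) hQx
  have ev1 : ∀ᶠ p : ℂ × ℂ in 𝓝 (1, x), 1 + 3 * p.1 ≠ 0 := by
    apply (Continuous.continuousAt (by fun_prop)).eventually_ne
    norm_num
  have ev2 : ∀ᶠ p : ℂ × ℂ in 𝓝 (1, x), 3 * p.1 * p.2 + p.2 ^ 2 ≠ 0 := by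
    apply (Continuous.continuousAt (by fun_prop)).eventually_ne
    show 3 * 1 * x + x ^ 2 ≠ 0
    have h3x : (3:ℂ) + x ≠ 0 := by
      intro h; apply hx3; linear_combination h
    intro h; exact mul_ne_zero hx0 h3x (by linear_combination h)
  have ev3 : ∀ᶠ p : ℂ × ℂ in 𝓝 (1, x), p.2 - p.1 ≠ 0 := by
    apply (Continuous.continuousAt (by fun_prop)).eventually_ne
    exact hx1'
  have ev4 : ∀ᶠ p : ℂ × ℂ in 𝓝 (1, x),
      3 * p.1 * (1 - p.1) * (3 * p.1 * p.2 + p.2 ^ 2) + (1 + 3 * p.1) * (p.2 - p.1) ≠ 0 := by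
    apply (Continuous.continuousAt (by fun_prop)).eventually_ne
    show 3 * 1 * (1 - 1) * (3 * 1 * x + x ^ 2) + (1 + 3 * 1) * (x - 1) ≠ 0
    intro h; apply hx1'
    linear_combination h / 4
  have ev5 : ∀ᶠ p : ℂ × ℂ in 𝓝 (1, x), dist (G p) (G (1, x)) < ε / 2 := by
    have := hGc.tendsto (Metric.ball_mem_nhds (G (1, x)) (half_pos hε))
    filter_upwards [this] with p hp using hp
  have evAll := ev1.and (ev2.and (ev3.and (ev4.and ev5)))
  rw [Metric.eventually_nhds_iff_ball] at evAll
  obtain ⟨δ, hδ, hball⟩ := evAll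
  refine ⟨Metric.ball x δ, mem_nhdsWithin_of_mem_nhds (Metric.ball_mem_nhds x hδ), ?_⟩
  have hae : ∀ᶠ a in 𝓝[{(1:ℂ)}ᶜ] 1, a ∈ Metric.ball (1:ℂ) δ ∧ a ≠ 1 := by
    have h1 : ∀ᶠ a in 𝓝[{(1:ℂ)}ᶜ] 1, a ∈ Metric.ball (1:ℂ) δ :=
      eventually_nhdsWithin_of_eventually_nhds
        (eventually_of_mem (Metric.ball_mem_nhds 1 hδ) fun a ha => ha)
    have h2 : ∀ᶠ a in 𝓝[{(1:ℂ)}ᶜ] 1, a ≠ 1 := eventually_mem_nhdsWithin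
    exact h1.and h2
  filter_upwards [hae] with a ha y hy
  have hpa : (a, y) ∈ Metric.ball ((1:ℂ), x) δ := by
    rw [← ball_prod_same]; exact ⟨ha.1, hy⟩
  have hp1 : ((1:ℂ), y) ∈ Metric.ball ((1:ℂ), x) δ := by
    rw [← ball_prod_same]; exact ⟨Metric.mem_ball_self hδ, hy⟩
  obtain ⟨c1, c2, c3, c4, c5⟩ := hball _ hpa
  obtain ⟨-, -, d3, -, d5⟩ := hball _ hp1
  have hFa : fFam a (fFam a y) = G (a, y) := key a y ha.2 c1 c2 c3 c4
  have hg : gLim y = G (1, y) := glim_eq y d3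
  rw [hFa, hg]
  calc dist (G (1, y)) (G (a, y))
      ≤ dist (G (1, y)) (G (1, x)) + dist (G (1, x)) (G (a, y)) := dist_triangle _ _ _
    _ < ε / 2 + ε / 2 := add_lt_add d5 (by rw [dist_comm]; exact c5)
    _ = ε := add_halves ε
end

section
/- Let F : T^Y → T^Z be a cover between trees of spheres of degree D ≥ 1, and let B be a branch of T^Y at a vertex v (a connected component of T^Y minus v) containing no critical leaf. Then F(B) is a branch of T^Z at F(v) and F : B → F(B) is a bijection. -/
open scoped Classical

/-- `x` and `y` are on the same side of vertex `v` in the graph `G`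
(there is a walk from `x` to `y` avoiding `v`). -/
def SameSide {V : Type*} (G : SimpleGraph V) (v x y : V) : Prop :=
  ∃ p : G.Walk x y, v ∉ p.support

/-- The branch of `s` at the vertex `v`: the connected component of `G − {v}` containing `s`. -/
def Branch {V : Type*} (G : SimpleGraph V) (v s : V) : Set V :=
  {u | ∃ p : G.Walk s u, v ∉ p.support}

/-- The (open) annulus `]]v₁,v₂[[`, the intersection of the branches `B_{v₁}(v₂)` and
`B_{v₂}(v₁)`. -/
def Annulus {V : Type*} (G : SimpleGraph V) (v₁ v₂ : V) : Set V :=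
  Branch G v₁ v₂ ∩ Branch G v₂ v₁

/-- `v` is a leaf of `G` (exactly one neighbour). -/
def IsLf {V : Type*} (G : SimpleGraph V) (v : V) : Prop := ∃! u, G.Adj v u

/-- `A` is a connected component of the subset `S` of vertices of `G`. -/
def IsCompOf {V : Type*} (G : SimpleGraph V) (A S : Set V) : Prop :=
  A ⊆ S ∧
  (∀ a ∈ A, ∀ b ∈ A, ∃ p : G.Walk a b, ∀ x ∈ p.support, x ∈ S) ∧
  (∀ a ∈ A, ∀ u, (∃ p : G.Walk a u, ∀ x ∈ p.support, x ∈ S) → u ∈ A)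

/-- A combinatorial model of a (holomorphic) cover `F : T^Y → T^Z` between trees of spheres:
a map of trees sending leaves to leaves and internal vertices to internal vertices, together
with local degrees `edeg` along edges and degrees `vdeg` of the sphere maps `f_v`, subject to
the fiber-counting condition and the local Riemann–Hurwitz relation (all critical points of
`f_v` are at attaching points of edges, since `f_v : S_v − Y_v → S_{F v} − Z_{F v}` is a
covering map). -/
structure STCover (V W : Type*) [Fintype V] [Fintype W] where
  TY : SimpleGraph V
  TZ : SimpleGraph W
  treeY : TY.IsTree
  treeZ : TZ.IsTree
  valY : ∀ v : V, IsLf TY v ∨ (∃ a b c : V, a ≠ b ∧ b ≠ c ∧ a ≠ c ∧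
    TY.Adj v a ∧ TY.Adj v b ∧ TY.Adj v c)
  F : V → W
  map_adj : ∀ {u v : V}, TY.Adj u v → TZ.Adj (F u) (F v)
  map_leaf : ∀ v : V, IsLf TY v → IsLf TZ (F v)
  map_internal : ∀ v : V, ¬ IsLf TY v → ¬ IsLf TZ (F v)
  edeg : V → V → ℕ
  edeg_pos : ∀ {u v : V}, TY.Adj u v → 1 ≤ edeg u v
  edeg_symm : ∀ u v : V, edeg u v = edeg v u
  vdeg : V → ℕ
  vdeg_pos : ∀ v : V, 1 ≤ vdeg v
  fiber_sum : ∀ v : V, ∀ w' : W, ¬ IsLf TY v → TZ.Adj (F v) w' →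
    ∑ u ∈ Finset.univ.filter (fun u => TY.Adj v u ∧ F u = w'), edeg v u = vdeg v
  RH_local : ∀ v : V, ¬ IsLf TY v →
    ∑ u ∈ Finset.univ.filter (fun u => TY.Adj v u), (edeg v u - 1) = 2 * (vdeg v - 1)
  leaf_vdeg : ∀ v u : V, IsLf TY v → TY.Adj v u → vdeg v = edeg v u

/-- A critical leaf of a cover between trees of spheres. -/
def STCover.CritLeaf {V W : Type*} [Fintype V] [Fintype W] (C : STCover V W) (v : V) : Prop :=
  IsLf C.TY v ∧ 2 ≤ C.vdeg v

namespace StmtAux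

open SimpleGraph Walk

variable {V : Type*} {G : SimpleGraph V}

lemma branch_ne {v s u : V} (h : u ∈ Branch G v s) : u ≠ v := by
  obtain ⟨p, hp⟩ := h
  exact fun huv => hp (huv ▸ p.end_mem_support)

lemma mem_branch_self {v s : V} (h : s ≠ v) : s ∈ Branch G v s :=
  ⟨Walk.nil, by simp [Ne.symm h]⟩

lemma branch_mono {v s u : V} (hu : u ∈ Branch G v s) : Branch G v u ⊆ Branch G v s := by
  obtain ⟨p, hp⟩ := hu
  rintro x ⟨q, hq⟩
  refine ⟨p.append q, ?_⟩
  rw [Walk.support_append]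
  intro h
  rcases List.mem_append.mp h with h | h
  · exact hp h
  · exact hq (List.mem_of_mem_tail h)

lemma branch_adj {v s u x : V} (hu : u ∈ Branch G v s) (hadj : G.Adj u x) (hx : x ≠ v) :
    x ∈ Branch G v s :=
  branch_mono hu ⟨Walk.cons hadj Walk.nil, by
    simp [Ne.symm (branch_ne hu), Ne.symm hx]⟩

lemma support_mem_branch {v s u : V} (p : G.Walk s u) (hp : v ∉ p.support) :
    ∀ x ∈ p.support, x ∈ Branch G v s := fun x hx =>
  ⟨p.takeUntil x hx, fun h => hp (p.support_takeUntil_subset hx h)⟩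

/-- In an acyclic graph, a vertex on a path that is adjacent to the start must be the
second vertex. -/
lemma eq_snd_of_adj_start (hG : G.IsAcyclic) {a c b x : V} (h : G.Adj a c) (q : G.Walk c b)
    (hp : (Walk.cons h q).IsPath) (hx : x ∈ (Walk.cons h q).support) (hadj : G.Adj a x) :
    x = c := by
  rw [Walk.support_cons, List.mem_cons] at hx
  rcases hx with rfl | hx
  · exact absurd hadj (G.irrefl)
  · rw [Walk.cons_isPath_iff] at hp
    have hq : (q.takeUntil x hx).IsPath := hp.1.takeUntil hx
    have hna : a ∉ (q.takeUntil x hx).support :=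
      fun ha => hp.2 (q.support_takeUntil_subset hx ha)
    have hP1 : (Walk.cons hadj (Walk.nil : G.Walk x x)).IsPath := by
      simp [Walk.cons_isPath_iff, hadj.ne]
    have hP2 : (Walk.cons h (q.takeUntil x hx)).IsPath :=
      (Walk.cons_isPath_iff _ _).2 ⟨hq, hna⟩
    have := hG.path_unique ⟨_, hP1⟩ ⟨_, hP2⟩
    have hlen := congrArg (fun p : G.Path a x => (p : G.Walk a x).length) this
    simp only [Walk.length_cons, Walk.length_nil] at hlen
    exact (Walk.eq_of_length_eq_zero (p := q.takeUntil x hx) (by omega)).symm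

lemma branch_subset_of_adj (hG : G.IsTree) {u p w : V} (hup : G.Adj u p) (huw : G.Adj u w)
    (hwp : w ≠ p) : Branch G u w ⊆ Branch G p u := by
  rintro x ⟨q, hq⟩
  have hpq : p ∉ q.support := by
    intro hpmem
    have hq' : u ∉ (q.takeUntil p hpmem).support :=
      fun h => hq (q.support_takeUntil_subset hpmem h)
    have hP1 : (Walk.cons huw.symm (Walk.cons hup (Walk.nil : G.Walk p p))).IsPath := by
      simp [Walk.cons_isPath_iff, hup.ne, huw.ne', hwp]
    have := hG.IsAcyclic.path_unique ((q.takeUntil p hpmem).toPath) ⟨_, hP1⟩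
    have hu : u ∈ ((q.takeUntil p hpmem).toPath : G.Walk w p).support := by
      rw [this]; simp
    exact hq' ((q.takeUntil p hpmem).support_toPath_subset hu)
  exact ⟨Walk.cons huw q, by
    rw [Walk.support_cons, List.mem_cons]
    rintro (rfl | h)
    · exact hup.ne rfl
    · exact hpq h⟩

lemma exists_parent (hG : G.IsTree) {u v : V} (huv : u ≠ v) :
    ∃ p, G.Adj u p ∧ Branch G p u ⊆ Branch G v u := by
  obtain ⟨w⟩ := hG.isConnected u v
  set P : G.Walk u v := (w.toPath : G.Walk u v) with hP
  have hPpath : P.IsPath := w.toPath.2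
  obtain ⟨p, h, q, hcons⟩ := Walk.exists_eq_cons_of_ne huv P
  refine ⟨p, h, ?_⟩
  rintro x ⟨r, hr⟩
  have hpP : p ∈ P.support := by rw [hcons]; simp
  refine ⟨r, ?_⟩
  intro hvr
  have hr' : p ∉ (r.takeUntil v hvr).support :=
    fun hh => hr (r.support_takeUntil_subset hvr hh)
  have := hG.IsAcyclic.path_unique ((r.takeUntil v hvr).toPath) ⟨P, hPpath⟩
  have hp2 : p ∈ ((r.takeUntil v hvr).toPath : G.Walk u v).support := by rw [this]; exact hpP
  exact hr' ((r.takeUntil v hvr).support_toPath_subset hp2)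


lemma isPath_loop_length {a b : V} (p : G.Walk a b) (hp : p.IsPath) (h : a = b) :
    p.length = 0 := by
  subst h
  have h2 := congrArg (fun q : G.Path a a => (q : G.Walk a a).length) (SimpleGraph.Path.loop_eq ⟨p, hp⟩)
  simpa using h2

end StmtAux

lemma degs_eq_one {V W : Type*} [Fintype V] [Fintype W] (C : STCover V W) :
    ∀ (n : ℕ) (u p : V), C.TY.Adj u p → (Branch C.TY p u).ncard ≤ n →
      (∀ x ∈ Branch C.TY p u, ¬ C.CritLeaf x) → C.vdeg u = 1 ∧ C.edeg u p = 1 := by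
  intro n
  induction n with
  | zero =>
    intro u p hup hcard _
    have hu : u ∈ Branch C.TY p u := StmtAux.mem_branch_self hup.ne
    have : 0 < (Branch C.TY p u).ncard := (Set.ncard_pos (Set.toFinite _)).mpr ⟨u, hu⟩
    omega
  | succ n ih =>
    intro u p hup hcard hnc
    have humem : u ∈ Branch C.TY p u := StmtAux.mem_branch_self hup.ne
    by_cases hlf : IsLf C.TY u
    · have h1 : C.vdeg u = 1 := by
        have hncu := hnc u humem
        have h2 := C.vdeg_pos u
        simp only [STCover.CritLeaf, not_and, not_le] at hncu
        have := hncu hlf; omega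
      exact ⟨h1, by rw [← C.leaf_vdeg u p hlf hup]; exact h1⟩
    · have hchild : ∀ w, C.TY.Adj u w → w ≠ p → C.edeg u w = 1 := by
        intro w huw hwp
        have hwmem : w ∈ Branch C.TY p u := StmtAux.branch_adj humem huw hwp
        by_cases hwlf : IsLf C.TY w
        · have hv1 : C.vdeg w = 1 := by
            have hncw := hnc w hwmem
            simp only [STCover.CritLeaf, not_and, not_le] at hncw
            have h2 := C.vdeg_pos w
            have := hncw hwlf; omega
          rw [C.edeg_symm, ← C.leaf_vdeg w u hwlf huw.symm]; exact hv1
        · have hsub : Branch C.TY u w ⊆ Branch C.TY p u :=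
            StmtAux.branch_subset_of_adj C.treeY hup huw hwp
          have hss : Branch C.TY u w ⊂ Branch C.TY p u :=
            ⟨hsub, fun h => (StmtAux.branch_ne (h humem)) rfl⟩
          have hlt : (Branch C.TY u w).ncard < (Branch C.TY p u).ncard :=
            Set.ncard_lt_ncard hss (Set.toFinite _)
          have := ih w u huw.symm (by omega) (fun x hx => hnc x (hsub hx))
          rw [C.edeg_symm]; exact this.2
      have hRH := C.RH_local u hlf
      have hsum : ∑ x ∈ Finset.univ.filter (fun x => C.TY.Adj u x), (C.edeg u x - 1)
          = C.edeg u p - 1 := by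
        refine Finset.sum_eq_single_of_mem p (by simp [hup]) ?_
        intro x hx hxp
        have : C.edeg u x = 1 := hchild x (by simpa using hx) hxp
        simp [this]
      have hfib := C.fiber_sum u (C.F p) hlf (C.map_adj hup)
      have hle : C.edeg u p ≤ C.vdeg u := by
        rw [← hfib]
        exact Finset.single_le_sum (f := fun x => C.edeg u x)
          (fun i _ => Nat.zero_le _) (by simp [hup])
      have he := C.edeg_pos hup
      have hd := C.vdeg_pos u
      rw [hsum] at hRH
      omega

/-- if `B` is a branch of `T^Y` at `v` containing no critical leaf, then
`F(B)` is a branch of `T^Z` at `F(v)` and `F : B → F(B)` is a bijection. -/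
theorem stmt7 {V W : Type*} [Fintype V] [Fintype W] (C : STCover V W)
    (D : ℕ) (hD : 1 ≤ D)
    (hdegC : ∀ w : W, ¬ IsLf C.TZ w →
      ∑ v ∈ Finset.univ.filter (fun v => C.F v = w ∧ ¬ IsLf C.TY v), C.vdeg v = D)
    (v s : V) (hs : s ≠ v)
    (hnc : ∀ u ∈ Branch C.TY v s, ¬ C.CritLeaf u) :
    (∃ s' : W, s' ≠ C.F v ∧ C.F '' Branch C.TY v s = Branch C.TZ (C.F v) s') ∧
    Set.InjOn C.F (Branch C.TY v s) := by
  classical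
  let φ : C.TY →g C.TZ := ⟨C.F, fun h => C.map_adj h⟩
  -- every vertex of the branch has vdeg 1
  have hvdeg1 : ∀ u ∈ Branch C.TY v s, C.vdeg u = 1 := by
    intro u hu
    obtain ⟨p, hup, hsub⟩ := StmtAux.exists_parent C.treeY (StmtAux.branch_ne hu)
    have hsub2 : Branch C.TY p u ⊆ Branch C.TY v s :=
      hsub.trans (StmtAux.branch_mono hu)
    exact (degs_eq_one C _ u p hup le_rfl (fun x hx => hnc x (hsub2 hx))).1
  -- local bijectivity at internal vertices of the branch
  have hloc : ∀ u ∈ Branch C.TY v s, ¬ IsLf C.TY u → ∀ w', C.TZ.Adj (C.F u) w' →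
      ∃! x, C.TY.Adj u x ∧ C.F x = w' := by
    intro u hu hlf w' hw'
    have hfib := C.fiber_sum u w' hlf hw'
    rw [hvdeg1 u hu] at hfib
    set T := Finset.univ.filter (fun x => C.TY.Adj u x ∧ C.F x = w') with hT
    have hcard : T.card ≤ 1 := by
      calc T.card = ∑ _x ∈ T, 1 := by rw [Finset.card_eq_sum_ones]
        _ ≤ ∑ x ∈ T, C.edeg u x :=
            Finset.sum_le_sum (fun x hx => C.edeg_pos (Finset.mem_filter.mp hx).2.1)
        _ = 1 := hfib
    have hne : T.Nonempty := by
      rcases Finset.eq_empty_or_nonempty T with h | h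
      · rw [h] at hfib; simp at hfib
      · exact h
    obtain ⟨a, ha⟩ := Finset.card_eq_one.mp (le_antisymm hcard hne.card_pos)
    have haT : a ∈ T := ha ▸ Finset.mem_singleton_self a
    refine ⟨a, (Finset.mem_filter.mp haT).2, ?_⟩
    intro y hy
    have : y ∈ T := Finset.mem_filter.mpr ⟨Finset.mem_univ _, hy⟩
    rw [ha, Finset.mem_singleton] at this; exact this
  -- images of paths staying in the branch (except possibly the final vertex) are paths
  have mapPath : ∀ (a b : V) (P : C.TY.Walk a b), P.IsPath →
      (∀ x ∈ P.support, x ∈ Branch C.TY v s ∨ x = b) → (P.map φ).IsPath := by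
    intro a b P
    induction P with
    | nil => intro _ _; simp
    | @cons a c b h Q ih =>
      intro hp hsupp
      rw [SimpleGraph.Walk.cons_isPath_iff] at hp
      have hQ : (Q.map φ).IsPath := ih hp.1 (fun x hx => hsupp x (by simp [hx]))
      rw [SimpleGraph.Walk.map_cons, SimpleGraph.Walk.cons_isPath_iff]
      refine ⟨hQ, ?_⟩
      intro hmem
      rw [SimpleGraph.Walk.support_map, List.mem_map] at hmem
      obtain ⟨x, hx, hfx⟩ := hmem
      have ha : a ∈ Branch C.TY v s := by
        rcases hsupp a (SimpleGraph.Walk.start_mem_support _) with h' | rfl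
        · exact h'
        · exact absurd Q.end_mem_support hp.2
      cases Q with
      | nil =>
        simp only [SimpleGraph.Walk.support_nil, List.mem_singleton] at hx
        subst hx
        exact (C.map_adj h).ne' hfx
      | @cons c c2 b h2 R =>
        have hc : c ∈ Branch C.TY v s := by
          rcases hsupp c (by simp) with h' | rfl
          · exact h'
          · exfalso
            have hQ1 := hp.1
            rw [SimpleGraph.Walk.cons_isPath_iff] at hQ1
            exact hQ1.2 R.end_mem_support
        have hc2mem : c2 ∈ (SimpleGraph.Walk.cons h2 R).support := by
          rw [SimpleGraph.Walk.support_cons]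
          exact List.mem_cons_of_mem _ R.start_mem_support
        have hcint : ¬ IsLf C.TY c := by
          rintro ⟨y, -, hy⟩
          have h1 : a = y := hy a h.symm
          have h2' : c2 = y := hy c2 h2
          exact hp.2 ((h1.trans h2'.symm) ▸ hc2mem)
        have hfamem : C.F a ∈ ((SimpleGraph.Walk.cons h2 R).map φ).support := by
          rw [SimpleGraph.Walk.support_map]
          exact List.mem_map.mpr ⟨x, hx, hfx⟩
        have hsnd : C.F a = C.F c2 :=
          StmtAux.eq_snd_of_adj_start C.treeZ.IsAcyclic (C.map_adj h2) (R.map φ)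
            hQ hfamem (C.map_adj h).symm
        obtain ⟨z, -, huniq⟩ := hloc c hc hcint (C.F c2) (C.map_adj h2)
        have hz1 : a = z := huniq a ⟨h.symm, hsnd⟩
        have hz2 : c2 = z := huniq c2 ⟨h2, rfl⟩
        exact hp.2 ((hz1.trans hz2.symm) ▸ hc2mem)
  -- walks inside the branch
  have hwalkB : ∀ x ∈ Branch C.TY v s, ∀ y ∈ Branch C.TY v s,
      ∃ w : C.TY.Walk x y, v ∉ w.support ∧ ∀ z ∈ w.support, z ∈ Branch C.TY v s := by
    intro x hx y hy
    obtain ⟨p1, hp1⟩ := hx; obtain ⟨p2, hp2⟩ := hy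
    refine ⟨p1.reverse.append p2, ?_, ?_⟩
    · rw [SimpleGraph.Walk.support_append]
      intro hmem
      rcases List.mem_append.mp hmem with h | h
      · exact hp1 (by rwa [SimpleGraph.Walk.support_reverse, List.mem_reverse] at h)
      · exact hp2 (List.mem_of_mem_tail h)
    · intro z hz
      rw [SimpleGraph.Walk.support_append] at hz
      rcases List.mem_append.mp hz with h | h
      · exact StmtAux.support_mem_branch p1 hp1 z
          (by rwa [SimpleGraph.Walk.support_reverse, List.mem_reverse] at h)
      · exact StmtAux.support_mem_branch p2 hp2 z (List.mem_of_mem_tail h)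
  -- the neighbour of v in the branch
  obtain ⟨wv⟩ := C.treeY.isConnected v s
  obtain ⟨u0, hvu0, q0, hq0⟩ :=
    SimpleGraph.Walk.exists_eq_cons_of_ne (Ne.symm hs) (wv.toPath : C.TY.Walk v s)
  have hq0path : (SimpleGraph.Walk.cons hvu0 q0).IsPath := hq0 ▸ wv.toPath.2
  have hvq0 : v ∉ q0.support := ((SimpleGraph.Walk.cons_isPath_iff _ _).mp hq0path).2
  have hu0B : u0 ∈ Branch C.TY v s :=
    ⟨q0.reverse, by rwa [SimpleGraph.Walk.support_reverse, List.mem_reverse]⟩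
  -- no point of the branch maps to F v
  have hnev : ∀ x ∈ Branch C.TY v s, C.F x ≠ C.F v := by
    intro x hx
    obtain ⟨w, -, hwB⟩ := hwalkB u0 hu0B x hx
    have hP0B : ∀ z ∈ (w.toPath : C.TY.Walk u0 x).support, z ∈ Branch C.TY v s :=
      fun z hz => hwB z (w.support_toPath_subset hz)
    have hcons : (SimpleGraph.Walk.cons hvu0 (w.toPath : C.TY.Walk u0 x)).IsPath :=
      (SimpleGraph.Walk.cons_isPath_iff _ _).2
        ⟨w.toPath.2, fun h => StmtAux.branch_ne (hP0B v h) rfl⟩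
    have hmap := mapPath x v _ hcons.reverse ?_
    · intro hfeq
      have hlen := StmtAux.isPath_loop_length _ hmap hfeq
      rw [SimpleGraph.Walk.length_map, SimpleGraph.Walk.length_reverse,
        SimpleGraph.Walk.length_cons] at hlen
      omega
    · intro z hz
      rw [SimpleGraph.Walk.support_reverse, List.mem_reverse,
        SimpleGraph.Walk.support_cons, List.mem_cons] at hz
      rcases hz with rfl | hz
      · exact Or.inr rfl
      · exact Or.inl (hP0B z hz)
  -- injectivity
  have hinj : Set.InjOn C.F (Branch C.TY v s) := by
    intro x hx y hy hfeq
    obtain ⟨w, -, hwB⟩ := hwalkB x hx y hy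
    have hmap := mapPath x y _ w.toPath.2
      (fun z hz => Or.inl (hwB z (w.support_toPath_subset hz)))
    have hlen := StmtAux.isPath_loop_length _ hmap hfeq
    rw [SimpleGraph.Walk.length_map] at hlen
    exact SimpleGraph.Walk.eq_of_length_eq_zero (p := (w.toPath : C.TY.Walk x y)) hlen
  -- lifting step
  have hstep : ∀ u ∈ Branch C.TY v s, ∀ z', C.TZ.Adj (C.F u) z' → z' ≠ C.F v →
      ∃ u', u' ∈ Branch C.TY v s ∧ C.TY.Adj u u' ∧ C.F u' = z' := by
    intro u hu z' hadj hzv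
    by_cases hlf : IsLf C.TY u
    · obtain ⟨p, hp, hup⟩ := hlf
      obtain ⟨q, hq, huq⟩ := C.map_leaf u ⟨p, hp, hup⟩
      have h1 : z' = q := huq z' hadj
      have h2 : C.F p = q := huq (C.F p) (C.map_adj hp)
      have h3 : C.F p = z' := h2.trans h1.symm
      have hpv : p ≠ v := fun h => hzv (by rw [← h3, h])
      exact ⟨p, StmtAux.branch_adj hu hp hpv, hp, h3⟩
    · obtain ⟨x, ⟨hx1, hx2⟩, -⟩ := hloc u hu hlf z' hadj
      have hxv : x ≠ v := fun h => hzv (by rw [← hx2, h])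
      exact ⟨x, StmtAux.branch_adj hu hx1 hxv, hx1, hx2⟩
  -- lifting walks
  have hlift : ∀ (y z : W) (r : C.TZ.Walk y z), C.F v ∉ r.support →
      ∀ u ∈ Branch C.TY v s, C.F u = y → ∃ u' ∈ Branch C.TY v s, C.F u' = z := by
    intro y z r
    induction r with
    | nil => intro _ u hu hfu; exact ⟨u, hu, hfu⟩
    | @cons y y2 z hadj r2 ih =>
      intro hv u hu hfu
      have hy2v : y2 ≠ C.F v := by
        intro h; apply hv
        rw [SimpleGraph.Walk.support_cons]
        exact List.mem_cons_of_mem _ (h ▸ r2.start_mem_support)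
      obtain ⟨u', hu'B, -, hfu'⟩ := hstep u hu y2 (hfu ▸ hadj) hy2v
      exact ih (fun h => hv (by
        rw [SimpleGraph.Walk.support_cons]; exact List.mem_cons_of_mem _ h)) u' hu'B hfu'
  refine ⟨⟨C.F u0, (C.map_adj hvu0).ne', ?_⟩, hinj⟩
  apply Set.Subset.antisymm
  · rintro z ⟨x, hx, rfl⟩
    obtain ⟨w, -, hwB⟩ := hwalkB u0 hu0B x hx
    refine ⟨w.map φ, ?_⟩
    rw [SimpleGraph.Walk.support_map]
    intro hmem
    obtain ⟨z0, hz0, hfz0⟩ := List.mem_map.mp hmem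
    exact hnev z0 (hwB z0 hz0) hfz0
  · rintro z ⟨r, hr⟩
    obtain ⟨u', hu'B, hfu'⟩ := hlift _ _ r hr u0 hu0B rfl
    exact ⟨u', hu'B, hfu'⟩
end

section
/- Let F : T^Y → T^Z be a cover between trees of spheres, and let A = ]]v₁, v₂[[ be an annulus in T^Y (the intersection of the branches B_{v₁}(v₂) and B_{v₂}(v₁)) containing no critical leaf. Then F(A) is an annulus in T^Z, A is a connected component of F⁻¹(F(A)), and F(Ā) = F(A)‾. If moreover A contains no critical element at all, then F : A → F(A) and F : Ā → F(A)‾ are bijections. -/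
open scoped Classical

/-!
Write `A = ]]v₁, v₂[[` and `A' = ]]F v₁, F v₂[[`. Riemann–Hurwitz at a vertex `y` reads
`∑ (edeg y u - 1) = 2 (vdeg y - 1)`. Hence a critical edge from `v` to `x` forces a critical edge
out of `x` away from `v`, and following such edges one reaches a critical leaf of the branch
`B_v(x)`. Likewise a fold at `y` (two neighbours with the same image) forces a critical edge at `y`
other than the two folded ones and any prescribed third one. If `y ∈ A` and one folded edge points
to `v₁`, prescribing the direction of `v₂` makes this edge lead into a branch contained in `A`; so
when `A` has no critical leaf, a path of `A ∪ {v₂}` running to `v₁` has no fold, and since `T^Z` is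
a tree, `F` maps it to a path. This yields `F(A) ⊆ A'` and `F v₁ ∉ F(A ∪ {v₂})`. Conversely every
edge at `F y` lifts to an edge at `y`, and lifting walks inside the connected set `A'` from a point
of `F(A)` gives `A' ⊆ F(A)`. When `vdeg = 1` on `A` there is no fold in `A` at all, so `F` is
injective there.
-/

open SimpleGraph Walk

section Branches

variable {V : Type*} {G : SimpleGraph V} {u v s x y z : V}

lemma mem_branch_self (h : s ≠ v) : s ∈ Branch G v s :=
  ⟨nil, by simpa using h.symm⟩

lemma center_notMem_branch : v ∉ Branch G v s := fun ⟨p, hp⟩ => hp p.end_mem_support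

lemma ne_of_mem_branch (h : x ∈ Branch G v s) : x ≠ v := by
  rintro rfl
  exact center_notMem_branch h

lemma mem_branch_of_walk (hx : x ∈ Branch G v s) (p : G.Walk x y) (hp : v ∉ p.support) :
    y ∈ Branch G v s := by
  obtain ⟨q, hq⟩ := hx
  exact ⟨q.append p, by simp [mem_support_append_iff, hq, hp]⟩

lemma mem_branch_of_adj (hx : x ∈ Branch G v s) (h : G.Adj x y) (hy : y ≠ v) :
    y ∈ Branch G v s :=
  mem_branch_of_walk hx h.toWalk (by simp [(ne_of_mem_branch hx).symm, hy.symm])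

lemma mem_branch_of_mem_support (hx : x ∈ Branch G v s) (p : G.Walk x y) (hp : v ∉ p.support)
    (hz : z ∈ p.support) : z ∈ Branch G v s :=
  mem_branch_of_walk hx (p.takeUntil z hz) fun h => hp (p.support_takeUntil_subset_support hz h)

lemma branch_eq_of_mem (h : x ∈ Branch G v s) : Branch G v x = Branch G v s := by
  obtain ⟨p, hp⟩ := h
  ext y
  exact ⟨fun ⟨q, hq⟩ => mem_branch_of_walk ⟨p, hp⟩ q hq,
    fun ⟨q, hq⟩ => ⟨p.reverse.append q, by simp [mem_support_append_iff, hp, hq]⟩⟩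

lemma exists_walk_of_mem_branch (hx : x ∈ Branch G v s) (hy : y ∈ Branch G v s) :
    ∃ p : G.Walk x y, v ∉ p.support := by
  rw [← branch_eq_of_mem hx] at hy
  exact hy

lemma branch_subset_branch (hy : y ∈ Branch G v s) (hz : G.Adj y z) (hv : v ∉ Branch G y z) :
    Branch G y z ⊆ Branch G v s := by
  rintro x ⟨p, hp⟩
  have hzv : z ≠ v := by
    rintro rfl
    exact hv (mem_branch_self hz.ne')
  exact mem_branch_of_walk (mem_branch_of_adj hy hz hzv) p fun hvp =>
    hv (mem_branch_of_mem_support (mem_branch_self hz.ne') p hp hvp)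

lemma annulus_comm : Annulus G u v = Annulus G v u := Set.inter_comm _ _

lemma branch_subset_annulus (hy : y ∈ Annulus G u v) (hz : G.Adj y z) (hu : u ∉ Branch G y z)
    (hv : v ∉ Branch G y z) : Branch G y z ⊆ Annulus G u v :=
  fun _ hx => ⟨branch_subset_branch hy.1 hz hu hx, branch_subset_branch hy.2 hz hv hx⟩

lemma exists_adj_mem_branch (hG : G.Preconnected) (h : x ≠ y) :
    ∃ r, G.Adj y r ∧ x ∈ Branch G y r := by
  obtain ⟨p⟩ := hG y x
  cases hp : p.bypass with
  | nil => exact absurd rfl h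
  | cons hr q =>
    have := p.bypass_isPath
    rw [hp, cons_isPath_iff] at this
    exact ⟨_, hr, q, this.2⟩

lemma annulus_nonempty (hG : G.Preconnected) (hne : u ≠ v) (hadj : ¬ G.Adj u v) :
    (Annulus G u v).Nonempty := by
  obtain ⟨r, hr, hvr⟩ := exists_adj_mem_branch hG hne.symm
  have hrv : r ≠ v := by
    rintro rfl
    exact hadj hr
  refine ⟨r, ?_, mem_branch_of_adj (mem_branch_self hne) hr hrv⟩
  rw [branch_eq_of_mem hvr]
  exact mem_branch_self hr.ne'

end Branches

namespace SimpleGraph.Walk.IsPath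

variable {V : Type*} {G : SimpleGraph V} {u v y : V} {p : G.Walk u v}

lemma mem_branch (hp : p.IsPath) (hy : y ∈ p.support) (hyv : y ≠ v) : y ∈ Branch G v u :=
  ⟨p.takeUntil y hy, endpoint_notMem_support_takeUntil hp hy hyv.symm⟩

lemma mem_annulus (hp : p.IsPath) (hy : y ∈ p.support) (hyu : y ≠ u) (hyv : y ≠ v) :
    y ∈ Annulus G u v :=
  ⟨hp.reverse.mem_branch (by simpa using hy) hyu, hp.mem_branch hy hyv⟩

lemma end_mem_branch_getVert (hp : p.IsPath) {i : ℕ} (hi : i < p.length) :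
    v ∈ Branch G (p.getVert i) (p.getVert (i + 1)) := by
  refine ⟨p.drop (i + 1), fun h => ?_⟩
  obtain ⟨m, hm, hml⟩ := mem_support_iff_exists_getVert.1 h
  rw [drop_getVert, drop_length] at *
  have := hp.getVert_injOn (by simp; omega) (by simp; omega) hm
  omega

end SimpleGraph.Walk.IsPath

lemma exists_isPath_of_mem_annulus {V : Type*} {G : SimpleGraph V} {u v x : V}
    (hx : x ∈ Annulus G u v) :
    ∃ P : G.Walk x u, P.IsPath ∧ ∀ y ∈ P.support, y ≠ u → y ∈ Annulus G u v := by
  obtain ⟨p, hp⟩ := hx.2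
  have hPv : v ∉ p.reverse.bypass.support := fun h =>
    hp (by simpa using p.reverse.support_bypass_subset_support h)
  refine ⟨_, p.reverse.bypass_isPath, fun y hy hyu => ⟨?_, mem_branch_of_mem_support hx.2 _ hPv hy⟩⟩
  rw [← branch_eq_of_mem hx.1]
  exact p.reverse.bypass_isPath.mem_branch hy hyu

namespace SimpleGraph.IsAcyclic

variable {V V' : Type*} {G : SimpleGraph V} {G' : SimpleGraph V'} {u v s s' x : V}

lemma notMem_branch_of_adj (hG : G.IsAcyclic) (hs : G.Adj v s) (hs' : G.Adj v s')
    (hne : s ≠ s') : s' ∉ Branch G v s := by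
  rintro ⟨p, hp⟩
  have hq : (hs.symm.toWalk).IsPath := by simp [hs.symm.ne]
  refine hp (p.support_bypass_subset_support ?_)
  exact hG.mem_support_of_ne_mem_support_of_adj_of_isPath p.bypass_isPath hq hs'.symm
    (by simp [hne.symm, hs'.ne'])

lemma notMem_branch_of_mem_branch (hG : G.IsAcyclic) (hs : G.Adj v s) (hs' : G.Adj v s')
    (hne : s ≠ s') (hx : x ∈ Branch G v s) : x ∉ Branch G v s' := fun hx' =>
  hG.notMem_branch_of_adj hs hs' hne <| by
    rw [← branch_eq_of_mem hx, branch_eq_of_mem hx']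
    exact mem_branch_self hs'.ne'

lemma annulus_eq_empty (hG : G.IsAcyclic) (h : G.Adj u v) : Annulus G u v = ∅ := by
  refine Set.eq_empty_of_forall_notMem fun x ⟨⟨p, hp⟩, ⟨q, hq⟩⟩ => hp ?_
  have hvq : v ∉ q.reverse.bypass.support := fun hv =>
    hq (by simpa using q.reverse.support_bypass_subset_support hv)
  simpa using p.reverse.support_bypass_subset_support <|
    hG.mem_support_of_ne_mem_support_of_adj_of_isPath p.reverse.bypass_isPath
      q.reverse.bypass_isPath h.symm hvq

lemma exists_walk_support_subset_annulus (hG : G.IsAcyclic) (ha : x ∈ Annulus G u v) {y : V}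
    (hy : y ∈ Annulus G u v) : ∃ p : G.Walk x y, ∀ z ∈ p.support, z ∈ Annulus G u v := by
  obtain ⟨p, hp⟩ := exists_walk_of_mem_branch ha.1 hy.1
  obtain ⟨q, hq⟩ := exists_walk_of_mem_branch ha.2 hy.2
  have hpq : p.bypass = q.bypass := congrArg Subtype.val <|
    (hG.subsingleton_path x y).elim ⟨_, p.bypass_isPath⟩ ⟨_, q.bypass_isPath⟩
  refine ⟨p.bypass, fun z hz => ⟨?_, ?_⟩⟩
  · exact mem_branch_of_mem_support ha.1 _ (fun h => hp (p.support_bypass_subset_support h)) hz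
  · rw [hpq] at hz
    exact mem_branch_of_mem_support ha.2 _ (fun h => hq (q.support_bypass_subset_support h)) hz

lemma isPath_cons_of_ne_snd (hG : G.IsAcyclic) {q : G.Walk v x} (hq : q.IsPath)
    (h : G.Adj u v) (hu : u ≠ q.snd) : (cons h q).IsPath :=
  hq.cons fun hmem => hu (hG.eq_snd_of_adj_start hq h.symm hmem)

lemma isPath_map_of_getVert_ne (hG' : G'.IsAcyclic) (f : G →g G') :
    ∀ {u v : V} (p : G.Walk u v),
      (∀ i, i + 2 ≤ p.length → f (p.getVert i) ≠ f (p.getVert (i + 2))) → (p.map f).IsPath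
  | _, _, nil, _ => by simp
  | _, _, cons h q, hfold => by
    have hq := isPath_map_of_getVert_ne hG' f q fun i hi => hfold (i + 1) (by simp; omega)
    refine hG'.isPath_cons_of_ne_snd hq (f.map_adj h) ?_
    rw [snd, getVert_map]
    rcases Nat.eq_zero_or_pos q.length with h0 | hpos
    · rw [q.getVert_of_length_le (by omega), ← q.eq_of_length_eq_zero h0]
      exact (f.map_adj h).ne
    · exact hfold 0 (by simp; omega)

end SimpleGraph.IsAcyclic

lemma not_isLf_of_adj {V : Type*} {G : SimpleGraph V} {y p q : V} (hp : G.Adj y p)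
    (hq : G.Adj y q) (hpq : p ≠ q) : ¬ IsLf G y :=
  fun ⟨_, _, huniq⟩ => hpq ((huniq p hp).trans (huniq q hq).symm)

lemma SimpleGraph.Walk.eq_of_isPath_map {V V' : Type*} {G : SimpleGraph V} {G' : SimpleGraph V'}
    {f : G →g G'} {u v : V} {p : G.Walk u v} (hp : (p.map f).IsPath) (h : f u = f v) : u = v := by
  have hnil := isPath_iff_nil.1 ((isPath_copy (p := p.map f) h rfl).2 hp)
  rw [← length_eq_zero_iff, length_copy, length_map] at hnil
  exact p.eq_of_length_eq_zero hnil

namespace STCover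

variable {V W : Type*} [Fintype V] [Fintype W] (C : STCover V W)

def toHom : C.TY →g C.TZ := ⟨C.F, C.map_adj⟩

lemma exists_adj_map_eq (y : V) {t : W} (ht : C.TZ.Adj (C.F y) t) :
    ∃ u, C.TY.Adj y u ∧ C.F u = t := by
  by_cases hy : IsLf C.TY y
  · obtain ⟨u, hu, -⟩ := id hy
    obtain ⟨_, -, huniq⟩ := C.map_leaf y hy
    exact ⟨u, hu, (huniq _ (C.map_adj hu)).trans (huniq t ht).symm⟩
  · obtain ⟨u, hu, -⟩ := Finset.exists_ne_zero_of_sum_ne_zero <| by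
      rw [C.fiber_sum y t hy ht]
      exact Nat.one_le_iff_ne_zero.1 (C.vdeg_pos y)
    exact ⟨u, by simpa using hu⟩

lemma edeg_le_vdeg {y p : V} (hy : ¬ IsLf C.TY y) (hp : C.TY.Adj y p) :
    C.edeg y p ≤ C.vdeg y :=
  C.fiber_sum y (C.F p) hy (C.map_adj hp) ▸
    Finset.single_le_sum (fun _ _ => Nat.zero_le _) (by simp [hp])

lemma edeg_add_edeg_le_vdeg {y p q : V} (hy : ¬ IsLf C.TY y) (hp : C.TY.Adj y p)
    (hq : C.TY.Adj y q) (hpq : p ≠ q) (hF : C.F p = C.F q) :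
    C.edeg y p + C.edeg y q ≤ C.vdeg y := by
  rw [← C.fiber_sum y (C.F p) hy (C.map_adj hp), ← Finset.sum_pair hpq]
  exact Finset.sum_le_sum_of_subset fun u hu => by
    simp only [Finset.mem_insert, Finset.mem_singleton] at hu
    rcases hu with rfl | rfl <;> simp [*]

lemma exists_critLeaf_mem_branch {v x : V} (hvx : C.TY.Adj v x) (hx2 : 2 ≤ C.edeg v x) :
    ∃ ℓ ∈ Branch C.TY v x, C.CritLeaf ℓ := by
  induction hn : (Branch C.TY v x).ncard using Nat.strong_induction_on generalizing v x with
  | _ n ih =>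
  by_cases hx : IsLf C.TY x
  · refine ⟨x, mem_branch_self hvx.ne', hx, ?_⟩
    rwa [C.leaf_vdeg x v hx hvx.symm, C.edeg_symm]
  -- Riemann–Hurwitz at `x`: the edge back to `v` cannot carry all of the ramification.
  obtain ⟨u, hxu, huv, hu2⟩ : ∃ u, C.TY.Adj x u ∧ u ≠ v ∧ 2 ≤ C.edeg x u := by
    by_contra! hcon
    have hRH := C.RH_local x hx
    rw [Finset.sum_eq_single_of_mem v (by simp [hvx.symm])
      fun u hu huv => by have := hcon u (by simpa using hu) huv; omega] at hRH
    have := C.edeg_le_vdeg hx hvx.symm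
    rw [C.edeg_symm] at hx2
    omega
  have hsub : Branch C.TY x u ⊆ Branch C.TY v x := branch_subset_branch
    (mem_branch_self hvx.ne') hxu (C.treeY.isAcyclic.notMem_branch_of_adj hxu hvx.symm huv)
  have hlt : (Branch C.TY x u).ncard < n := hn ▸ Set.ncard_lt_ncard
    ((Set.ssubset_iff_of_subset hsub).2 ⟨x, mem_branch_self hvx.ne', center_notMem_branch⟩)
    (Set.toFinite _)
  obtain ⟨ℓ, hℓ, hcrit⟩ := ih _ hlt hxu hu2 rfl
  exact ⟨ℓ, hsub hℓ, hcrit⟩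

lemma exists_critical_edge_of_fold {y p q r : V} (hp : C.TY.Adj y p) (hq : C.TY.Adj y q)
    (hr : C.TY.Adj y r) (hpq : p ≠ q) (hF : C.F p = C.F q) :
    ∃ z, C.TY.Adj y z ∧ z ≠ p ∧ z ≠ q ∧ z ≠ r ∧ 2 ≤ C.edeg y z := by
  have hy := not_isLf_of_adj hp hq hpq
  by_contra! hcon
  have hsum : ∑ u ∈ Finset.univ.filter (fun u => C.TY.Adj y u), (C.edeg y u - 1) ≤
      ∑ u ∈ {p, q} ∪ {r}, (C.edeg y u - 1) :=
    Finset.sum_le_sum_of_ne_zero fun u hu hu0 => by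
      by_contra hmem
      simp only [Finset.mem_union, Finset.mem_insert, Finset.mem_singleton, not_or] at hmem
      have := hcon u (by simpa using hu) hmem.1.1 hmem.1.2 hmem.2
      omega
  have hunion := Finset.sum_union_inter (s₁ := {p, q}) (s₂ := {r})
    (f := fun u => C.edeg y u - 1)
  rw [Finset.sum_pair hpq, Finset.sum_singleton] at hunion
  have := C.RH_local y hy
  have := C.edeg_add_edeg_le_vdeg hy hp hq hpq hF
  have := C.edeg_le_vdeg hy hr
  have := C.edeg_pos hp
  have := C.edeg_pos hq
  omega

variable {v₁ v₂ : V}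

lemma map_ne_map_of_mem_branch (hnc : ∀ u ∈ Annulus C.TY v₁ v₂, ¬ C.CritLeaf u) {y p q : V}
    (hy : y ∈ Annulus C.TY v₁ v₂) (hp : C.TY.Adj y p) (hq : C.TY.Adj y q) (hpq : p ≠ q)
    (hv₁ : v₁ ∈ Branch C.TY y q) : C.F p ≠ C.F q := by
  intro hF
  have hT := C.treeY.isAcyclic
  obtain ⟨r, hr, hv₂⟩ :=
    exists_adj_mem_branch C.treeY.connected.preconnected (ne_of_mem_branch hy.2).symm
  obtain ⟨z, hz, -, hzq, hzr, hz2⟩ := C.exists_critical_edge_of_fold hp hq hr hpq hF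
  obtain ⟨ℓ, hℓ, hcrit⟩ := C.exists_critLeaf_mem_branch hz hz2
  refine hnc ℓ (branch_subset_annulus hy hz ?_ ?_ hℓ) hcrit
  · exact hT.notMem_branch_of_mem_branch hq hz hzq.symm hv₁
  · exact hT.notMem_branch_of_mem_branch hr hz hzr.symm hv₂

lemma isPath_map_of_interior_mem_annulus (hnc : ∀ u ∈ Annulus C.TY v₁ v₂, ¬ C.CritLeaf u)
    {x : V} {P : C.TY.Walk x v₁} (hP : P.IsPath)
    (hint : ∀ y ∈ P.support, y ≠ x → y ≠ v₁ → y ∈ Annulus C.TY v₁ v₂) :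
    (P.map C.toHom).IsPath := by
  refine C.treeZ.isAcyclic.isPath_map_of_getVert_ne C.toHom P fun i hi => ?_
  have hinj {a b : ℕ} (ha : a ≤ P.length) (hb : b ≤ P.length) (hab : a ≠ b) :
      P.getVert a ≠ P.getVert b := fun h => hab (hP.getVert_injOn ha hb h)
  have hy : P.getVert (i + 1) ∈ Annulus C.TY v₁ v₂ := by
    refine hint _ (P.getVert_mem_support _) ?_ ?_
    · simpa using hinj (a := i + 1) (b := 0) (by omega) (by omega) (by omega)
    · simpa using hinj (a := i + 1) (b := P.length) (by omega) le_rfl (by omega)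
  exact C.map_ne_map_of_mem_branch hnc hy (P.adj_getVert_succ (by omega)).symm
    (P.adj_getVert_succ (by omega)) (hinj (by omega) hi (by omega))
    (hP.end_mem_branch_getVert (by omega))

lemma map_ne_map_left (hnc : ∀ u ∈ Annulus C.TY v₁ v₂, ¬ C.CritLeaf u) (hne : v₁ ≠ v₂)
    {x : V} (hx : x ∈ Annulus C.TY v₁ v₂ ∨ x = v₂) : C.F x ≠ C.F v₁ := by
  obtain ⟨P, hP, hint⟩ : ∃ P : C.TY.Walk x v₁, P.IsPath ∧
      ∀ y ∈ P.support, y ≠ x → y ≠ v₁ → y ∈ Annulus C.TY v₁ v₂ := by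
    rcases hx with hx | rfl
    · obtain ⟨P, hP, hA⟩ := exists_isPath_of_mem_annulus hx
      exact ⟨P, hP, fun y hy _ hy₁ => hA y hy hy₁⟩
    · obtain ⟨P⟩ := C.treeY.connected.preconnected x v₁
      exact ⟨P.bypass, P.bypass_isPath, fun y hy hy₂ hy₁ =>
        annulus_comm ▸ P.bypass_isPath.mem_annulus hy hy₂ hy₁⟩
  have hx₁ : x ≠ v₁ := by
    rcases hx with hx | rfl
    exacts [ne_of_mem_branch hx.1, hne.symm]
  exact fun h => hx₁ (eq_of_isPath_map (C.isPath_map_of_interior_mem_annulus hnc hP hint) h)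

lemma map_mem_branch (hnc : ∀ u ∈ Annulus C.TY v₁ v₂, ¬ C.CritLeaf u) (hne : v₁ ≠ v₂)
    {x : V} (hx : x ∈ Annulus C.TY v₁ v₂) : C.F x ∈ Branch C.TZ (C.F v₂) (C.F v₁) := by
  obtain ⟨P, -, hA⟩ := exists_isPath_of_mem_annulus hx
  refine ⟨(P.map C.toHom).reverse, fun h => ?_⟩
  obtain ⟨y, hy, hFy⟩ : ∃ y ∈ P.support, C.F y = C.F v₂ := by simpa [toHom] using h
  by_cases hy₁ : y = v₁
  · exact C.map_ne_map_left (annulus_comm ▸ hnc) hne.symm (Or.inr hy₁) hFy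
  · exact C.map_ne_map_left (annulus_comm ▸ hnc) hne.symm (Or.inl (annulus_comm ▸ hA y hy hy₁)) hFy

lemma image_annulus_subset (hnc : ∀ u ∈ Annulus C.TY v₁ v₂, ¬ C.CritLeaf u) (hne : v₁ ≠ v₂) :
    C.F '' Annulus C.TY v₁ v₂ ⊆ Annulus C.TZ (C.F v₁) (C.F v₂) := by
  rintro _ ⟨x, hx, rfl⟩
  exact ⟨C.map_mem_branch (annulus_comm ▸ hnc) hne.symm (annulus_comm ▸ hx),
    C.map_mem_branch hnc hne hx⟩

lemma exists_lift {w z : W} (q : C.TZ.Walk w z) (y : V) (hy : C.F y = w) :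
    ∃ x, C.F x = z ∧ ∃ p : C.TY.Walk y x, ∀ u ∈ p.support, C.F u ∈ q.support := by
  induction q generalizing y with
  | nil => exact ⟨y, hy, nil, by simp [hy]⟩
  | cons h q ih =>
    subst hy
    obtain ⟨u, hu, rfl⟩ := C.exists_adj_map_eq y h
    obtain ⟨x, hx, p, hp⟩ := ih u rfl
    exact ⟨x, hx, cons hu p, by simpa using fun v hv => Or.inr (hp v hv)⟩

lemma annulus_subset_image (hnc : ∀ u ∈ Annulus C.TY v₁ v₂, ¬ C.CritLeaf u) (hne : v₁ ≠ v₂) :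
    Annulus C.TZ (C.F v₁) (C.F v₂) ⊆ C.F '' Annulus C.TY v₁ v₂ := by
  intro z hz
  by_cases hadj : C.TY.Adj v₁ v₂
  · rw [C.treeZ.isAcyclic.annulus_eq_empty (C.map_adj hadj)] at hz
    exact hz.elim
  obtain ⟨y, hy⟩ := annulus_nonempty C.treeY.connected.preconnected hne hadj
  obtain ⟨q, hq⟩ := C.treeZ.isAcyclic.exists_walk_support_subset_annulus
    (C.image_annulus_subset hnc hne ⟨y, hy, rfl⟩) hz
  obtain ⟨x, rfl, p, hp⟩ := C.exists_lift q y rfl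
  have h₁ : v₁ ∉ p.support := fun h => center_notMem_branch (hq _ (hp _ h)).1
  have h₂ : v₂ ∉ p.support := fun h => center_notMem_branch (hq _ (hp _ h)).2
  exact ⟨x, ⟨mem_branch_of_walk hy.1 p h₁, mem_branch_of_walk hy.2 p h₂⟩, rfl⟩

lemma image_annulus (hnc : ∀ u ∈ Annulus C.TY v₁ v₂, ¬ C.CritLeaf u) (hne : v₁ ≠ v₂) :
    C.F '' Annulus C.TY v₁ v₂ = Annulus C.TZ (C.F v₁) (C.F v₂) :=
  (C.image_annulus_subset hnc hne).antisymm (C.annulus_subset_image hnc hne)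

lemma isCompOf_annulus (hnc : ∀ u ∈ Annulus C.TY v₁ v₂, ¬ C.CritLeaf u) (hne : v₁ ≠ v₂) :
    IsCompOf C.TY (Annulus C.TY v₁ v₂) (C.F ⁻¹' (C.F '' Annulus C.TY v₁ v₂)) := by
  refine ⟨Set.subset_preimage_image _ _, fun a ha b hb => ?_, fun a ha u ⟨p, hp⟩ => ?_⟩
  · obtain ⟨p, hp⟩ := C.treeY.isAcyclic.exists_walk_support_subset_annulus ha hb
    exact ⟨p, fun x hx => Set.subset_preimage_image _ _ (hp x hx)⟩
  · rw [C.image_annulus hnc hne] at hp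
    exact ⟨mem_branch_of_walk ha.1 p fun h => center_notMem_branch (hp _ h).1,
      mem_branch_of_walk ha.2 p fun h => center_notMem_branch (hp _ h).2⟩

lemma injOn_annulus (hd : ∀ u ∈ Annulus C.TY v₁ v₂, C.vdeg u = 1) :
    Set.InjOn C.F (Annulus C.TY v₁ v₂) := by
  intro a ha b hb hab
  obtain ⟨p, hp⟩ := C.treeY.isAcyclic.exists_walk_support_subset_annulus ha hb
  have hP := p.bypass_isPath
  refine eq_of_isPath_map (f := C.toHom)
    (C.treeZ.isAcyclic.isPath_map_of_getVert_ne C.toHom p.bypass fun i hi hF => ?_) hab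
  have hy := hp _ (p.support_bypass_subset_support (p.bypass.getVert_mem_support (i + 1)))
  have hne : p.bypass.getVert i ≠ p.bypass.getVert (i + 2) := fun h => by
    have := hP.getVert_injOn (by simp; omega) (by simp; omega) h
    omega
  have hadj₁ := (p.bypass.adj_getVert_succ (i := i) (by omega)).symm
  have hadj₂ := p.bypass.adj_getVert_succ (i := i + 1) (by omega)
  have hsum := C.edeg_add_edeg_le_vdeg (not_isLf_of_adj hadj₁ hadj₂ hne) hadj₁ hadj₂ hne hF
  rw [hd _ hy] at hsum
  have := C.edeg_pos hadj₁
  have := C.edeg_pos hadj₂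
  omega

lemma injOn_annulus_union_pair (hnc : ∀ u ∈ Annulus C.TY v₁ v₂, ¬ C.CritLeaf u)
    (hne : v₁ ≠ v₂) (hd : ∀ u ∈ Annulus C.TY v₁ v₂, C.vdeg u = 1) :
    Set.InjOn C.F (Annulus C.TY v₁ v₂ ∪ {v₁, v₂}) := by
  have hdisj : Disjoint (Annulus C.TY v₁ v₂) {v₁, v₂} := Set.disjoint_left.2 fun x hx h => by
    rcases h with rfl | rfl
    exacts [center_notMem_branch hx.1, center_notMem_branch hx.2]
  refine (Set.injOn_union hdisj).2 ⟨C.injOn_annulus hd, Set.injOn_pair.2 fun h =>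
    (C.map_ne_map_left hnc hne (Or.inr rfl) h.symm).elim, ?_⟩
  rintro x hx y (rfl | rfl)
  · exact C.map_ne_map_left hnc hne (Or.inl hx)
  · exact C.map_ne_map_left (annulus_comm ▸ hnc) hne.symm (Or.inl (annulus_comm ▸ hx))

end STCover

theorem stmt8_general {V W : Type*} [Fintype V] [Fintype W] (C : STCover V W)
    (v₁ v₂ : V) (hne : v₁ ≠ v₂)
    (hnc : ∀ u ∈ Annulus C.TY v₁ v₂, ¬ C.CritLeaf u) :
    C.F '' Annulus C.TY v₁ v₂ = Annulus C.TZ (C.F v₁) (C.F v₂) ∧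
    IsCompOf C.TY (Annulus C.TY v₁ v₂) (C.F ⁻¹' (C.F '' Annulus C.TY v₁ v₂)) ∧
    C.F '' (Annulus C.TY v₁ v₂ ∪ {v₁, v₂}) =
      Annulus C.TZ (C.F v₁) (C.F v₂) ∪ {C.F v₁, C.F v₂} ∧
    ((∀ u ∈ Annulus C.TY v₁ v₂, C.vdeg u = 1) →
      Set.InjOn C.F (Annulus C.TY v₁ v₂) ∧
      Set.InjOn C.F (Annulus C.TY v₁ v₂ ∪ {v₁, v₂})) := by
  have hFA := C.image_annulus hnc hne
  refine ⟨hFA, C.isCompOf_annulus hnc hne, ?_, fun hd =>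
    ⟨C.injOn_annulus hd, C.injOn_annulus_union_pair hnc hne hd⟩⟩
  rw [Set.image_union, hFA, Set.image_pair]

/-- if the annulus `A = ]]v₁,v₂[[` contains no critical leaf, then `F(A)` is an
annulus, `A` is a connected component of `F⁻¹(F(A))`, and `F(Ā) = F(A)‾`.  If moreover `A`
contains no critical element at all, then `F` is injective on `A` and on its closure `Ā`. -/
theorem stmt8 {V W : Type*} [Fintype V] [Fintype W] (C : STCover V W)
    (v₁ v₂ : V) (hne : v₁ ≠ v₂) (h₁ : ¬ IsLf C.TY v₁) (h₂ : ¬ IsLf C.TY v₂)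
    (hnc : ∀ u ∈ Annulus C.TY v₁ v₂, ¬ C.CritLeaf u) :
    C.F '' Annulus C.TY v₁ v₂ = Annulus C.TZ (C.F v₁) (C.F v₂) ∧
    IsCompOf C.TY (Annulus C.TY v₁ v₂) (C.F ⁻¹' (C.F '' Annulus C.TY v₁ v₂)) ∧
    C.F '' (Annulus C.TY v₁ v₂ ∪ {v₁, v₂}) =
      Annulus C.TZ (C.F v₁) (C.F v₂) ∪ {C.F v₁, C.F v₂} ∧
    ((∀ u ∈ Annulus C.TY v₁ v₂, C.vdeg u = 1) →
      Set.InjOn C.F (Annulus C.TY v₁ v₂) ∧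
      Set.InjOn C.F (Annulus C.TY v₁ v₂ ∪ {v₁, v₂})) :=
  stmt8_general C v₁ v₂ hne hnc
end
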